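/- arXiv:1505.06912 — 3 statements merged into one kernel-verified Lean document; each statement's English description precedes it below -/
import Mathlib

section
/- If μ is a locally subexponential probability distribution on [0,∞) and ρ(dx) = c⁻¹ 1_{[0,c)}(x)dx is the uniform distribution on [0,c), then ρ * μ has a subexponential density (ρ * μ ∈ S_ac). -/
open MeasureTheory Filter Set

noncomputable def conv (f g : ℝ → ℝ) (x : ℝ) : ℝ := ∫ u, f (x - u) * g u

def IsDensity (f : ℝ → ℝ) : Prop := (∀ x, 0 ≤ f x) ∧ (∫ x, f x) = 1

def LongTailedFun (f : ℝ → ℝ) : Prop :=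
  (∀ᶠ x in atTop, 0 < f x) ∧
  ∀ a : ℝ, Tendsto (fun x => f (x + a) / f x) atTop (nhds 1)

def LongDensity (f : ℝ → ℝ) : Prop := IsDensity f ∧ LongTailedFun f

def SubexpDensity (f : ℝ → ℝ) : Prop :=
  LongDensity f ∧ Tendsto (fun x => conv f f x / f x) atTop (nhds 2)

noncomputable def mconv (μ ν : Measure ℝ) : Measure ℝ :=
  (μ.prod ν).map (fun p : ℝ × ℝ => p.1 + p.2)

noncomputable def locMass (μ : Measure ℝ) (c x : ℝ) : ℝ := (μ (Ioc x (x + c))).toReal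

def MemLDelta (μ : Measure ℝ) (c : ℝ) : Prop :=
  (∀ᶠ x in atTop, 0 < locMass μ c x) ∧
  ∀ a : ℝ, Tendsto (fun x => locMass μ c (x + a) / locMass μ c x) atTop (nhds 1)

def MemSDelta (μ : Measure ℝ) (c : ℝ) : Prop :=
  MemLDelta μ c ∧
  Tendsto (fun x => locMass (mconv μ μ) c x / locMass μ c x) atTop (nhds 2)

def LLoc (μ : Measure ℝ) : Prop := ∀ c > 0, MemLDelta μ c
def SLoc (μ : Measure ℝ) : Prop := ∀ c > 0, MemSDelta μ c

def LAc (μ : Measure ℝ) : Prop :=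
  ∃ g : ℝ → ℝ, LongDensity g ∧ μ = volume.withDensity (fun x => ENNReal.ofReal (g x))
def SAc (μ : Measure ℝ) : Prop :=
  ∃ g : ℝ → ℝ, SubexpDensity g ∧ μ = volume.withDensity (fun x => ENNReal.ofReal (g x))

/-!
The law `ρ ∗ μ` has density `g x = c⁻¹ μ (x - c, x]`, which is long-tailed because `μ`
is. By Fubini, `(g ⊗ g) x = c⁻² ∫₀ᶜ (μ ∗ μ) (x - s - c, x - s] ds`. Cutting `[0, c)` into `n`
pieces of length `b = c / n` and enlarging (shrinking) each window to length `c + b` (`c - b`)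
sandwiches `(g ⊗ g) x / g x` between Riemann sums whose limits, by the local subexponentiality
of `μ`, are `2 (n ± 1) / n`; letting `n → ∞` gives the limit `2`.
-/

open scoped ENNReal Topology

lemma tendsto_of_eventually_sandwich {ι α : Type*} {L : Filter ι} [L.NeBot] {l : Filter α}
    {f : α → ℝ} {a : ℝ} {lo up : ι → α → ℝ} {Lo Up : ι → ℝ}
    (hLo : Tendsto Lo L (𝓝 a)) (hUp : Tendsto Up L (𝓝 a))
    (hlo : ∀ᶠ n in L, Tendsto (lo n) l (𝓝 (Lo n)))
    (hup : ∀ᶠ n in L, Tendsto (up n) l (𝓝 (Up n)))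
    (hlo_le : ∀ᶠ n in L, ∀ᶠ x in l, lo n x ≤ f x)
    (hle_up : ∀ᶠ n in L, ∀ᶠ x in l, f x ≤ up n x) :
    Tendsto f l (𝓝 a) := by
  refine tendsto_order.2 ⟨fun a' ha' => ?_, fun a' ha' => ?_⟩
  · obtain ⟨n, hn, hlo, hle⟩ :=
      ((hLo.eventually (lt_mem_nhds ha')).and (hlo.and hlo_le)).exists
    filter_upwards [hlo.eventually (lt_mem_nhds hn), hle] with x h1 h2
    exact h1.trans_le h2
  · obtain ⟨n, hn, hup, hle⟩ :=
      ((hUp.eventually (gt_mem_nhds ha')).and (hup.and hle_up)).exists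
    filter_upwards [hup.eventually (gt_mem_nhds hn), hle] with x h1 h2
    exact h2.trans_lt h1

lemma tendsto_sub_const_atTop (c : ℝ) : Tendsto (fun x : ℝ => x - c) atTop atTop := by
  simpa only [sub_eq_add_neg, id_eq] using tendsto_atTop_add_const_right atTop (-c) tendsto_id

lemma isDensity_of_isProbabilityMeasure_withDensity {g : ℝ → ℝ} (hg : Measurable g)
    (hnn : ∀ x, 0 ≤ g x)
    [IsProbabilityMeasure (volume.withDensity fun x => ENNReal.ofReal (g x))] : IsDensity g := by
  refine ⟨hnn, ?_⟩
  rw [integral_eq_lintegral_of_nonneg_ae (ae_of_all _ hnn) hg.aestronglyMeasurable,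
    ← setLIntegral_univ, ← withDensity_apply _ MeasurableSet.univ, measure_univ,
    ENNReal.toReal_one]

lemma mconv_eq_conv (μ ν : Measure ℝ) : mconv μ ν = μ ∗ ν := rfl

instance (μ ν : Measure ℝ) [IsFiniteMeasure μ] [IsFiniteMeasure ν] :
    IsFiniteMeasure (mconv μ ν) :=
  inferInstanceAs (IsFiniteMeasure (μ ∗ ν))

instance (μ ν : Measure ℝ) [IsProbabilityMeasure μ] [IsProbabilityMeasure ν] :
    IsProbabilityMeasure (mconv μ ν) :=
  inferInstanceAs (IsProbabilityMeasure (μ ∗ ν))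

lemma conv_withDensity_eq (μ : Measure ℝ) [SFinite μ] {f : ℝ → ℝ≥0∞} (hf : Measurable f) :
    volume.withDensity f ∗ μ = volume.withDensity (fun z => ∫⁻ y, f (z - y) ∂μ) := by
  ext s hs
  have hind : Measurable (s.indicator (1 : ℝ → ℝ≥0∞)) := measurable_one.indicator hs
  rw [withDensity_apply _ hs, ← lintegral_indicator_one hs, Measure.lintegral_conv hind,
    lintegral_withDensity_eq_lintegral_mul _ hf (by fun_prop)]
  calc ∫⁻ x, f x * ∫⁻ y, s.indicator 1 (x + y) ∂μ
      = ∫⁻ x, ∫⁻ y, f x * s.indicator 1 (x + y) ∂μ := by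
        congr 1 with x
        rw [lintegral_const_mul _ (by fun_prop)]
    _ = ∫⁻ y, (∫⁻ x, f x * s.indicator 1 (x + y)) ∂μ :=
        lintegral_lintegral_swap
          ((hf.comp measurable_fst).mul (hind.comp measurable_add)).aemeasurable
    _ = ∫⁻ y, (∫⁻ z, f (z - y) * s.indicator 1 z) ∂μ := by
        congr 1 with y
        rw [← lintegral_sub_right_eq_self (μ := volume) _ y]
        simp only [sub_add_cancel]
    _ = ∫⁻ z, ∫⁻ y, f (z - y) * s.indicator 1 z ∂μ :=
        lintegral_lintegral_swap
          ((hf.comp (measurable_snd.sub measurable_fst)).mul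
            (hind.comp measurable_snd)).aemeasurable
    _ = ∫⁻ z in s, ∫⁻ y, f (z - y) ∂μ := by
        rw [← lintegral_indicator hs]
        congr 1 with z
        rw [lintegral_mul_const _ (by fun_prop)]
        by_cases hz : z ∈ s <;> simp [hz]

lemma lintegral_conv_density_mul (μ : Measure ℝ) [SFinite μ] {f h : ℝ → ℝ≥0∞}
    (hf : Measurable f) (hh : Measurable h) (x : ℝ) :
    ∫⁻ u, (∫⁻ v, f (x - u - v) ∂μ) * ∫⁻ w, h (u - w) ∂μ
      = ∫⁻ t, h t * ∫⁻ z, f (x - t - z) ∂(μ ∗ μ) := by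
  have hΦ : Measurable fun p : ℝ × ℝ => ∫⁻ v, f (p.1 - p.2 - v) ∂μ :=
    Measurable.lintegral_prod_right' (f := fun q : (ℝ × ℝ) × ℝ => f (q.1.1 - q.1.2 - q.2))
      (by fun_prop)
  have hΦx : Measurable fun u => ∫⁻ v, f (x - u - v) ∂μ :=
    hΦ.comp (measurable_const.prodMk measurable_id)
  calc ∫⁻ u, (∫⁻ v, f (x - u - v) ∂μ) * ∫⁻ w, h (u - w) ∂μ
      = ∫⁻ u, ∫⁻ w, (∫⁻ v, f (x - u - v) ∂μ) * h (u - w) ∂μ := by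
        congr 1 with u
        rw [lintegral_const_mul _ (by fun_prop)]
    _ = ∫⁻ w, (∫⁻ u, (∫⁻ v, f (x - u - v) ∂μ) * h (u - w)) ∂μ :=
        lintegral_lintegral_swap ((hΦx.comp measurable_fst).mul
          (hh.comp measurable_sub)).aemeasurable
    _ = ∫⁻ w, (∫⁻ t, (∫⁻ v, f (x - t - w - v) ∂μ) * h t) ∂μ := by
        congr 1 with w
        rw [← lintegral_add_right_eq_self (μ := volume) _ w]
        simp only [sub_add_eq_sub_sub, add_sub_cancel_right]
    _ = ∫⁻ t, ∫⁻ w, (∫⁻ v, f (x - t - w - v) ∂μ) * h t ∂μ :=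
        lintegral_lintegral_swap
          ((hΦ.comp ((measurable_const.sub measurable_snd).prodMk measurable_fst)).mul
            (hh.comp measurable_snd)).aemeasurable
    _ = ∫⁻ t, h t * ∫⁻ z, f (x - t - z) ∂(μ ∗ μ) := by
        congr 1 with t
        have hΦt : Measurable fun w => ∫⁻ v, f (x - t - w - v) ∂μ :=
          hΦ.comp (measurable_const.prodMk measurable_id)
        rw [lintegral_mul_const _ hΦt, mul_comm, Measure.lintegral_conv (by fun_prop)]
        simp only [sub_add_eq_sub_sub]

lemma locMass_nonneg (μ : Measure ℝ) (d x : ℝ) : 0 ≤ locMass μ d x := ENNReal.toReal_nonneg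

section LocMass

variable (μ : Measure ℝ) [IsFiniteMeasure μ]

lemma ofReal_locMass (d x : ℝ) : ENNReal.ofReal (locMass μ d x) = μ (Ioc x (x + d)) :=
  ENNReal.ofReal_toReal (measure_ne_top μ _)

lemma measurable_locMass (d : ℝ) : Measurable (locMass μ d) := by
  have hs : MeasurableSet {p : ℝ × ℝ | p.1 < p.2 ∧ p.2 ≤ p.1 + d} :=
    (measurableSet_lt measurable_fst measurable_snd).inter
      (measurableSet_le measurable_snd (measurable_fst.add_const d))
  exact (measurable_measure_prodMk_left (ν := μ) hs).ennreal_toReal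

lemma locMass_add {d e : ℝ} (hd : 0 ≤ d) (he : 0 ≤ e) (x : ℝ) :
    locMass μ (d + e) x = locMass μ d x + locMass μ e (x + d) := by
  have hsplit : Ioc x (x + d) ∪ Ioc (x + d) (x + d + e) = Ioc x (x + (d + e)) := by
    rw [← add_assoc]
    exact Ioc_union_Ioc_eq_Ioc (le_add_of_nonneg_right hd) (le_add_of_nonneg_right he)
  rw [locMass, ← hsplit, measure_union (Ioc_disjoint_Ioc_of_le le_rfl) measurableSet_Ioc,
    ENNReal.toReal_add (measure_ne_top μ _) (measure_ne_top μ _)]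
  rfl

end LocMass

section Ratios

variable {μ : Measure ℝ} [IsFiniteMeasure μ] {b : ℝ}

lemma tendsto_locMass_natCast_mul_div (hμ : MemLDelta μ b) (hb : 0 < b) (k : ℕ) :
    Tendsto (fun x => locMass μ (k * b) x / locMass μ b x) atTop (𝓝 k) := by
  induction k with
  | zero => simp [locMass]
  | succ k ih =>
    rw [Nat.cast_succ]
    refine (ih.add (hμ.2 (k * b))).congr fun x => ?_
    rw [add_one_mul, locMass_add μ (by positivity) hb.le, add_div]

lemma tendsto_locMass_div_locMass (hμ : MemLDelta μ b) (hb : 0 < b) (p : ℕ) {q : ℕ}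
    (hq : 0 < q) :
    Tendsto (fun x => locMass μ (p * b) x / locMass μ (q * b) x) atTop (𝓝 ((p : ℝ) / q)) := by
  refine ((tendsto_locMass_natCast_mul_div hμ hb p).div
    (tendsto_locMass_natCast_mul_div hμ hb q) (by positivity)).congr' ?_
  filter_upwards [hμ.1] with x hx
  exact div_div_div_cancel_right₀ hx.ne' _ _

lemma tendsto_locMass_mconv_div (hμ : SLoc μ) (hb : 0 < b) {p q : ℕ} (hp : 0 < p)
    (hq : 0 < q) (a : ℝ) :
    Tendsto (fun x => locMass (mconv μ μ) (p * b) (x + a) / locMass μ (q * b) x) atTop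
      (𝓝 (2 * ((p : ℝ) / q))) := by
  have hpb : 0 < p * b := by positivity
  have hqb : 0 < q * b := by positivity
  have hshift : Tendsto (fun x : ℝ => x + a) atTop atTop :=
    tendsto_atTop_add_const_right _ a tendsto_id
  have := (((hμ _ hpb).2.comp hshift).mul
    ((tendsto_locMass_div_locMass (hμ b hb).1 hb p hq).comp hshift)).mul ((hμ _ hqb).1.2 a)
  rw [mul_one] at this
  refine this.congr' ?_
  filter_upwards [hshift.eventually (hμ _ hpb).1.1, hshift.eventually (hμ _ hqb).1.1]
    with x hp' hq'
  simp only [Function.comp_apply]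
  rw [div_mul_div_cancel₀ hp'.ne', div_mul_div_cancel₀ hq'.ne']

lemma tendsto_sum_locMass_mconv_div (hμ : SLoc μ) (hb : 0 < b) {m p : ℕ} (hm : 0 < m)
    (hp : 0 < p) {d e : ℝ} (hd : p * b = d) (he : m * b = e) (a : ℕ → ℝ) :
    Tendsto (fun x => ∑ k ∈ Finset.range m,
        (m : ℝ)⁻¹ * (locMass (mconv μ μ) d (x - a k) / locMass μ e x)) atTop
      (𝓝 (2 * ((p : ℝ) / m))) := by
  subst hd he
  have := tendsto_finsetSum (Finset.range m) fun k _ =>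
    (tendsto_locMass_mconv_div hμ hb hp hm (-a k)).const_mul (m : ℝ)⁻¹
  rw [Finset.sum_const, Finset.card_range, nsmul_eq_mul, ← mul_assoc,
    mul_inv_cancel₀ (by positivity), one_mul] at this
  simpa only [← sub_eq_add_neg] using this

end Ratios

section Riemann

variable {b : ℝ}

lemma setLIntegral_Ico_eq_sum (f : ℝ → ℝ≥0∞) (hb : 0 ≤ b) (m : ℕ) :
    ∫⁻ s in Ico 0 (m * b), f s
      = ∑ k ∈ Finset.range m, ∫⁻ s in Ico (k * b) ((k + 1) * b), f s := by
  induction m with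
  | zero => simp
  | succ m ih =>
    rw [Nat.cast_succ, ← Ico_union_Ico_eq_Ico (b := m * b) (by positivity) (by nlinarith),
      lintegral_union measurableSet_Ico Ico_disjoint_Ico_same, ih, Finset.sum_range_succ]

lemma volume_Ico_natCast_mul (k : ℕ) : volume (Ico (k * b) ((k + 1) * b)) = ENNReal.ofReal b := by
  rw [Real.volume_Ico, add_one_mul, add_sub_cancel_left]

lemma setLIntegral_Ico_le_sum {f : ℝ → ℝ≥0∞} {U : ℕ → ℝ≥0∞} (hb : 0 ≤ b) (m : ℕ)
    (hU : ∀ k : ℕ, ∀ s ∈ Ico (k * b) ((k + 1) * b), f s ≤ U k) :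
    ∫⁻ s in Ico 0 (m * b), f s ≤ ∑ k ∈ Finset.range m, ENNReal.ofReal b * U k := by
  rw [setLIntegral_Ico_eq_sum f hb]
  refine Finset.sum_le_sum fun k _ => ?_
  calc ∫⁻ s in Ico (k * b) ((k + 1) * b), f s
      ≤ ∫⁻ _ in Ico (k * b) ((k + 1) * b), U k := setLIntegral_mono' measurableSet_Ico (hU k)
    _ = ENNReal.ofReal b * U k := by rw [setLIntegral_const, volume_Ico_natCast_mul, mul_comm]

lemma sum_le_setLIntegral_Ico {f : ℝ → ℝ≥0∞} {L : ℕ → ℝ≥0∞} (hb : 0 ≤ b) (m : ℕ)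
    (hL : ∀ k : ℕ, ∀ s ∈ Ico (k * b) ((k + 1) * b), L k ≤ f s) :
    ∑ k ∈ Finset.range m, ENNReal.ofReal b * L k ≤ ∫⁻ s in Ico 0 (m * b), f s := by
  rw [setLIntegral_Ico_eq_sum f hb]
  refine Finset.sum_le_sum fun k _ => ?_
  calc ENNReal.ofReal b * L k
      = ∫⁻ _ in Ico (k * b) ((k + 1) * b), L k := by
        rw [setLIntegral_const, volume_Ico_natCast_mul, mul_comm]
    _ ≤ ∫⁻ s in Ico (k * b) ((k + 1) * b), f s := setLIntegral_mono' measurableSet_Ico (hL k)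

lemma sum_inv_mul_div_eq {m : ℕ} {c : ℝ} (hm : m * b = c) (hc : c ≠ 0) (A : ℕ → ℝ) (D : ℝ) :
    ∑ k ∈ Finset.range m, (m : ℝ)⁻¹ * (A k / D) = c⁻¹ * (∑ k ∈ Finset.range m, b * A k) / D := by
  subst hm
  have hm0 : (m : ℝ) ≠ 0 := left_ne_zero_of_mul hc
  have hb0 : b ≠ 0 := right_ne_zero_of_mul hc
  rw [Finset.mul_sum, Finset.sum_div]
  refine Finset.sum_congr rfl fun k _ => ?_
  field_simp

variable (ν : Measure ℝ) [IsFiniteMeasure ν] {c : ℝ}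

lemma toReal_setLIntegral_le_sum_locMass (hb : 0 ≤ b) {m : ℕ} (hm : m * b = c) (x : ℝ) :
    (∫⁻ s in Ico 0 c, ν (Ioc (x - s - c) (x - s))).toReal
      ≤ ∑ k ∈ Finset.range m, b * locMass ν (c + b) (x - c - (k + 1) * b) := by
  refine ENNReal.toReal_le_of_le_ofReal
    (Finset.sum_nonneg fun k _ => mul_nonneg hb (locMass_nonneg ν _ _)) ?_
  simp_rw [ENNReal.ofReal_sum_of_nonneg (fun k _ => mul_nonneg hb (locMass_nonneg ν _ _)),
    ENNReal.ofReal_mul hb, ofReal_locMass]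
  rw [← hm]
  refine setLIntegral_Ico_le_sum hb m fun k s hs => measure_mono (Ioc_subset_Ioc ?_ ?_)
  · linarith [hs.2]
  · linarith [hs.1]

lemma sum_locMass_le_toReal_setLIntegral (hb : 0 ≤ b) {m : ℕ} (hm : m * b = c) (x : ℝ) :
    ∑ k ∈ Finset.range m, b * locMass ν (c - b) (x - c - k * b)
      ≤ (∫⁻ s in Ico 0 c, ν (Ioc (x - s - c) (x - s))).toReal := by
  have hfin : ∫⁻ s in Ico 0 c, ν (Ioc (x - s - c) (x - s)) ≠ ⊤ := by
    refine ne_top_of_le_ne_top ?_ (setLIntegral_mono' measurableSet_Ico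
      fun s _ => measure_mono (subset_univ (Ioc (x - s - c) (x - s))))
    rw [setLIntegral_const, Real.volume_Ico]
    finiteness
  rw [← ENNReal.ofReal_le_iff_le_toReal hfin,
    ENNReal.ofReal_sum_of_nonneg (fun k _ => mul_nonneg hb (locMass_nonneg ν _ _))]
  simp_rw [ENNReal.ofReal_mul hb, ofReal_locMass]
  rw [← hm]
  refine sum_le_setLIntegral_Ico hb m fun k s hs => measure_mono (Ioc_subset_Ioc ?_ ?_)
  · linarith [hs.1]
  · linarith [hs.2]

end Riemann

noncomputable def unifIco (c : ℝ) : Measure ℝ :=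
  volume.withDensity (fun x => ENNReal.ofReal (indicator (Ico (0:ℝ) c) (fun _ => c⁻¹) x))

noncomputable def unifConvDensity (μ : Measure ℝ) (c x : ℝ) : ℝ := c⁻¹ * locMass μ c (x - c)

section Uniform

variable {c : ℝ}

lemma unifIco_eq_withDensity_indicator (c : ℝ) :
    unifIco c = volume.withDensity (fun x => ENNReal.ofReal c⁻¹ * (Ico 0 c).indicator 1 x) := by
  unfold unifIco
  congr 1
  funext x
  by_cases hx : x ∈ Ico (0:ℝ) c <;> simp [hx]

lemma isProbabilityMeasure_unifIco (hc : 0 < c) : IsProbabilityMeasure (unifIco c) := by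
  constructor
  rw [unifIco_eq_withDensity_indicator, withDensity_apply _ MeasurableSet.univ,
    Measure.restrict_univ, lintegral_const_mul _ (measurable_one.indicator measurableSet_Ico),
    lintegral_indicator_one measurableSet_Ico, Real.volume_Ico, sub_zero,
    ← ENNReal.ofReal_mul (by positivity), inv_mul_cancel₀ hc.ne', ENNReal.ofReal_one]

lemma lintegral_indicator_Ico_sub (μ : Measure ℝ) (c y : ℝ) :
    ∫⁻ v, (Ico 0 c).indicator 1 (y - v) ∂μ = μ (Ioc (y - c) y) := by
  rw [← lintegral_indicator_one measurableSet_Ioc]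
  congr 1 with v
  by_cases hv : v ∈ Ioc (y - c) y
  · have : y - v ∈ Ico 0 c := ⟨by linarith [hv.2], by linarith [hv.1]⟩
    simp [hv, this]
  · have : y - v ∉ Ico 0 c := fun h => hv ⟨by linarith [h.2], by linarith [h.1]⟩
    simp [hv, this]

lemma unifConvDensity_nonneg (μ : Measure ℝ) (hc : 0 < c) (x : ℝ) : 0 ≤ unifConvDensity μ c x :=
  mul_nonneg (inv_nonneg.2 hc.le) (locMass_nonneg μ c _)

lemma longTailedFun_unifConvDensity {μ : Measure ℝ} (hc : 0 < c) (hμ : MemLDelta μ c) :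
    LongTailedFun (unifConvDensity μ c) := by
  refine ⟨?_, fun a => ?_⟩
  · filter_upwards [(tendsto_sub_const_atTop c).eventually hμ.1] with x hx
    exact mul_pos (inv_pos.2 hc) hx
  · refine ((hμ.2 a).comp (tendsto_sub_const_atTop c)).congr fun x => ?_
    rw [Function.comp_apply, unifConvDensity, unifConvDensity, sub_add_eq_add_sub,
      mul_div_mul_left _ _ (inv_ne_zero hc.ne')]

variable (μ : Measure ℝ) [IsFiniteMeasure μ]

lemma ofReal_unifConvDensity (c x : ℝ) :
    ENNReal.ofReal (unifConvDensity μ c x) = ENNReal.ofReal c⁻¹ * μ (Ioc (x - c) x) := by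
  rw [unifConvDensity, ENNReal.ofReal_mul' (locMass_nonneg μ c _), ofReal_locMass, sub_add_cancel]

lemma measurable_unifConvDensity (c : ℝ) : Measurable (unifConvDensity μ c) :=
  ((measurable_locMass μ c).comp (measurable_id.sub_const c)).const_mul c⁻¹

lemma mconv_unifIco (c : ℝ) :
    mconv (unifIco c) μ = volume.withDensity (fun x => ENNReal.ofReal (unifConvDensity μ c x)) := by
  have hχ : Measurable ((Ico (0:ℝ) c).indicator (1 : ℝ → ℝ≥0∞)) :=
    measurable_one.indicator measurableSet_Ico
  rw [mconv_eq_conv, unifIco_eq_withDensity_indicator, conv_withDensity_eq μ (by fun_prop)]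
  congr 1 with x
  rw [lintegral_const_mul _ (by fun_prop), lintegral_indicator_Ico_sub,
    ofReal_unifConvDensity]

lemma conv_unifConvDensity (hc : 0 < c) (x : ℝ) :
    conv (unifConvDensity μ c) (unifConvDensity μ c) x
      = c⁻¹ * c⁻¹ * (∫⁻ s in Ico 0 c, mconv μ μ (Ioc (x - s - c) (x - s))).toReal := by
  have hχ : Measurable ((Ico (0:ℝ) c).indicator (1 : ℝ → ℝ≥0∞)) :=
    measurable_one.indicator measurableSet_Ico
  have hg := measurable_unifConvDensity μ c
  rw [conv, integral_eq_lintegral_of_nonneg_ae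
    (ae_of_all _ fun u => mul_nonneg (unifConvDensity_nonneg μ hc _)
      (unifConvDensity_nonneg μ hc _))
    (by fun_prop)]
  simp_rw [ENNReal.ofReal_mul (unifConvDensity_nonneg μ hc _), ofReal_unifConvDensity,
    ← lintegral_indicator_Ico_sub μ c, mul_mul_mul_comm]
  rw [lintegral_const_mul' _ _ (by finiteness), lintegral_conv_density_mul μ hχ hχ x,
    ENNReal.toReal_mul, ENNReal.toReal_mul, ENNReal.toReal_ofReal (inv_nonneg.2 hc.le),
    ← mconv_eq_conv, ← lintegral_indicator measurableSet_Ico]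
  congr 3 with t
  rw [lintegral_indicator_Ico_sub]
  by_cases ht : t ∈ Ico 0 c <;> simp [ht]

end Uniform

lemma tendsto_conv_unifConvDensity_div {μ : Measure ℝ} [IsFiniteMeasure μ] {c : ℝ} (hc : 0 < c)
    (hμ : SLoc μ) :
    Tendsto (fun x => conv (unifConvDensity μ c) (unifConvDensity μ c) x / unifConvDensity μ c x)
      atTop (𝓝 2) := by
  set ν := mconv μ μ
  set b : ℕ → ℝ := fun n => c / (n + 1 : ℕ)
  have hb (n : ℕ) : 0 < b n := by positivity
  have hm (n : ℕ) : ((n + 1 : ℕ) : ℝ) * b n = c := by simp only [b]; field_simp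
  have hpos : ∀ᶠ x in atTop, 0 < locMass μ c (x - c) :=
    (tendsto_sub_const_atTop c).eventually (hμ c hc).1.1
  have hratio (x : ℝ) : conv (unifConvDensity μ c) (unifConvDensity μ c) x / unifConvDensity μ c x
      = c⁻¹ * (∫⁻ s in Ico 0 c, ν (Ioc (x - s - c) (x - s))).toReal / locMass μ c (x - c) := by
    rw [conv_unifConvDensity μ hc, unifConvDensity, mul_assoc,
      mul_div_mul_left _ _ (inv_ne_zero hc.ne')]
  simp only [hratio]
  refine tendsto_of_eventually_sandwich (L := atTop)
    (Lo := fun n : ℕ => 2 * ((n : ℝ) / (n + 1 : ℕ)))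
    (Up := fun n : ℕ => 2 * (((n + 2 : ℕ) : ℝ) / (n + 1 : ℕ)))
    (lo := fun n x => ∑ k ∈ Finset.range (n + 1), ((n + 1 : ℕ) : ℝ)⁻¹ *
      (locMass ν (c - b n) (x - c - k * b n) / locMass μ c (x - c)))
    (up := fun n x => ∑ k ∈ Finset.range (n + 1), ((n + 1 : ℕ) : ℝ)⁻¹ *
      (locMass ν (c + b n) (x - c - (k + 1) * b n) / locMass μ c (x - c))) ?_ ?_ ?_ ?_ ?_ ?_
  · simpa using (tendsto_natCast_div_add_atTop (1 : ℝ)).const_mul 2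
  · have hsplit (n : ℕ) : ((n + 2 : ℕ) : ℝ) / (n + 1 : ℕ) = 1 + 1 / ((n : ℝ) + 1) := by
      push_cast; field_simp; ring
    simp only [hsplit]
    simpa using (tendsto_one_div_add_atTop_nhds_zero_nat.const_add 1).const_mul (2 : ℝ)
  · filter_upwards [eventually_gt_atTop 0] with n hn
    refine (tendsto_sum_locMass_mconv_div hμ (hb n) n.succ_pos hn ?_ (hm n) _).comp
      (tendsto_sub_const_atTop c)
    rw [← hm n]; push_cast; ring
  · refine Eventually.of_forall fun n =>
      (tendsto_sum_locMass_mconv_div hμ (hb n) n.succ_pos (by omega) ?_ (hm n) _).comp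
        (tendsto_sub_const_atTop c)
    rw [← hm n]; push_cast; ring
  · refine Eventually.of_forall fun n => ?_
    filter_upwards [hpos] with x hx
    rw [sum_inv_mul_div_eq (hm n) hc.ne']
    gcongr
    exact sum_locMass_le_toReal_setLIntegral ν (hb n).le (hm n) x
  · refine Eventually.of_forall fun n => ?_
    filter_upwards [hpos] with x hx
    rw [sum_inv_mul_div_eq (hm n) hc.ne']
    gcongr
    exact toReal_setLIntegral_le_sum_locMass ν (hb n).le (hm n) x

theorem stmt4_general (μ : Measure ℝ) [IsProbabilityMeasure μ] (hμ : SLoc μ)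
    (c : ℝ) (hc : 0 < c) (ρ : Measure ℝ)
    (hρ : ρ = volume.withDensity
      (fun x => ENNReal.ofReal (indicator (Ico (0:ℝ) c) (fun _ => c⁻¹) x))) :
    SAc (mconv ρ μ) := by
  have hconv : mconv ρ μ = volume.withDensity fun x => ENNReal.ofReal (unifConvDensity μ c x) :=
    hρ ▸ mconv_unifIco μ c
  have : IsProbabilityMeasure ρ := hρ ▸ isProbabilityMeasure_unifIco hc
  have : IsProbabilityMeasure
      (volume.withDensity fun x => ENNReal.ofReal (unifConvDensity μ c x)) := hconv ▸ inferInstance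
  refine ⟨unifConvDensity μ c, ⟨⟨?_, ?_⟩, ?_⟩, hconv⟩
  · exact isDensity_of_isProbabilityMeasure_withDensity (measurable_unifConvDensity μ c)
      (unifConvDensity_nonneg μ hc)
  · exact longTailedFun_unifConvDensity hc (hμ c hc).1
  · exact tendsto_conv_unifConvDensity_div hc hμ

theorem stmt4 (μ : Measure ℝ) [IsProbabilityMeasure μ] (hsupp : μ (Iio 0) = 0) (hμ : SLoc μ)
    (c : ℝ) (hc : 0 < c) (ρ : Measure ℝ)
    (hρ : ρ = volume.withDensity
      (fun x => ENNReal.ofReal (indicator (Ico (0:ℝ) c) (fun _ => c⁻¹) x))) :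
    SAc (mconv ρ μ) :=
  stmt4_general μ hμ c hc ρ hρ
end

section
/- If ρ is a probability distribution on [0,∞) with ρ ∈ L_loc (locally long-tailed), then ρ((x−c, x]) ∼ c·ρ((x−1, x]) as x → ∞ for every c > 0. -/
/-!
Writing `m_c(x) = ρ((x, x + c])`, the interval `(x, x + n c]` splits into `n` translates of
`(x, x + c]`, so long-tailedness gives `m_{nc}(x) / m_c(x) → n`. Comparing `p/q` and `1` through
the common step `1/q` gives `m_r(x) / m_1(x) → r` for rational `r ≥ 0`, and monotonicity of
`c ↦ m_c(x)` squeezes a real `c` between rationals. A final shift by `-c` moves the windows to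
`(x - c, x]`.
-/

open MeasureTheory Filter Set

open Topology

section LocalMass

variable (μ : Measure ℝ) [IsLocallyFiniteMeasure μ]

lemma locMass_mono {a b : ℝ} (hab : a ≤ b) (x : ℝ) : locMass μ a x ≤ locMass μ b x :=
  ENNReal.toReal_mono measure_Ioc_lt_top.ne (measure_mono (Ioc_subset_Ioc_right (by linarith)))

lemma locMass_add_s11 {a b : ℝ} (ha : 0 ≤ a) (hb : 0 ≤ b) (x : ℝ) :
    locMass μ (a + b) x = locMass μ a x + locMass μ b (x + a) := by
  unfold locMass
  rw [← ENNReal.toReal_add measure_Ioc_lt_top.ne measure_Ioc_lt_top.ne,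
    ← measure_union (Ioc_disjoint_Ioc_of_le le_rfl) measurableSet_Ioc,
    Ioc_union_Ioc_eq_Ioc (by linarith) (by linarith), add_assoc]

lemma locMass_natCast_mul {c : ℝ} (hc : 0 ≤ c) (n : ℕ) (x : ℝ) :
    locMass μ (n * c) x = ∑ k ∈ Finset.range n, locMass μ c (x + k * c) := by
  induction n with
  | zero => simp [locMass]
  | succ n ih =>
    rw [Nat.cast_succ, add_one_mul, locMass_add_s11 μ (by positivity) hc, ih, Finset.sum_range_succ]

end LocalMass

namespace MemLDelta

variable {μ : Measure ℝ} {c : ℝ}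

lemma tendsto_locMass_add_div_locMass_add (h : MemLDelta μ c) (a b : ℝ) :
    Tendsto (fun x => locMass μ c (x + a) / locMass μ c (x + b)) atTop (𝓝 1) := by
  have := (h.2 a).div (h.2 b) one_ne_zero
  rw [div_one] at this
  refine this.congr' ?_
  filter_upwards [h.1] with x hx
  exact div_div_div_cancel_right₀ hx.ne' _ _

lemma tendsto_locMass_natCast_mul_div [IsLocallyFiniteMeasure μ] (h : MemLDelta μ c)
    (hc : 0 ≤ c) (n : ℕ) :
    Tendsto (fun x => locMass μ (n * c) x / locMass μ c x) atTop (𝓝 n) := by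
  simp only [locMass_natCast_mul μ hc, Finset.sum_div]
  simpa using tendsto_finsetSum (Finset.range n) fun k _ => h.2 (k * c)

end MemLDelta

namespace LLoc

variable {μ : Measure ℝ} [IsLocallyFiniteMeasure μ]

lemma tendsto_locMass_ratCast_div (hμ : LLoc μ) {r : ℚ} (hr : 0 ≤ r) :
    Tendsto (fun x => locMass μ r x / locMass μ 1 x) atTop (𝓝 r) := by
  set p : ℕ := r.num.toNat
  set q : ℕ := r.den
  have hq : (0 : ℝ) < q := by positivity
  have hr_eq : (r : ℝ) = p / q := by
    rw [Rat.cast_def]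
    congr 1
    exact_mod_cast (Int.toNat_of_nonneg (Rat.num_nonneg.mpr hr)).symm
  have hstep := hμ (1 / q) (by positivity)
  have hp_mul : (p : ℝ) * (1 / q) = r := by rw [hr_eq]; ring
  have hq_mul : (q : ℝ) * (1 / q) = 1 := by field_simp
  have hlim := (hstep.tendsto_locMass_natCast_mul_div (by positivity) p).div
    (hstep.tendsto_locMass_natCast_mul_div (by positivity) q) hq.ne'
  rw [hp_mul, hq_mul, ← hr_eq] at hlim
  refine hlim.congr' ?_
  filter_upwards [hstep.1] with x hx
  exact div_div_div_cancel_right₀ hx.ne' _ _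

lemma tendsto_locMass_div (hμ : LLoc μ) {c : ℝ} (hc : 0 < c) :
    Tendsto (fun x => locMass μ c x / locMass μ 1 x) atTop (𝓝 c) := by
  have hpos := (hμ 1 one_pos).1
  refine tendsto_order.2 ⟨fun a ha => ?_, fun b hb => ?_⟩
  · obtain ⟨r, hr, hrc⟩ := exists_rat_btwn (max_lt ha hc)
    have hr0 : (0 : ℚ) ≤ r := by exact_mod_cast (le_max_right a 0).trans hr.le
    filter_upwards [(tendsto_order.1 (hμ.tendsto_locMass_ratCast_div hr0)).1 a
      ((le_max_left a 0).trans_lt hr), hpos] with x hx h1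
    exact hx.trans_le (div_le_div_of_nonneg_right (locMass_mono μ hrc.le x) h1.le)
  · obtain ⟨s, hcs, hs⟩ := exists_rat_btwn hb
    have hs0 : (0 : ℚ) ≤ s := by exact_mod_cast hc.le.trans hcs.le
    filter_upwards [(tendsto_order.1 (hμ.tendsto_locMass_ratCast_div hs0)).2 b hs, hpos]
      with x hx h1
    exact (div_le_div_of_nonneg_right (locMass_mono μ hcs.le x) h1.le).trans_lt hx

end LLoc

theorem stmt11_general (ρ : Measure ℝ) [IsProbabilityMeasure ρ]
    (hρ : LLoc ρ) :
    ∀ c > (0:ℝ), Tendsto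
      (fun x => (ρ (Ioc (x - c) x)).toReal / (c * (ρ (Ioc (x - 1) x)).toReal))
      atTop (nhds 1) := by
  intro c hc
  have hratio := (hρ.tendsto_locMass_div hc).comp (tendsto_atTop_add_const_right _ (-c) tendsto_id)
  have hshift := (hρ 1 one_pos).tendsto_locMass_add_div_locMass_add (-c) (-1)
  have hlim := (hratio.mul hshift).div_const c
  rw [mul_one, div_self hc.ne'] at hlim
  refine hlim.congr' ?_
  filter_upwards [(tendsto_atTop_add_const_right _ (-c) tendsto_id).eventually (hρ 1 one_pos).1]
    with x hx
  simp only [Function.comp_apply, id, locMass, ← sub_eq_add_neg, sub_add_cancel] at hx ⊢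
  field_simp

theorem stmt11 (ρ : Measure ℝ) [IsProbabilityMeasure ρ] (hsupp : ρ (Iio 0) = 0)
    (hρ : LLoc ρ) :
    ∀ c > (0:ℝ), Tendsto
      (fun x => (ρ (Ioc (x - c) x)).toReal / (c * (ρ (Ioc (x - 1) x)).toReal))
      atTop (nhds 1) :=
  stmt11_general ρ hρ
end

section
/- Let μ be the distribution with density M⁻¹x^{−α−1}h(log x) on [1,∞) (h periodic with period log b, vanishing logarithmically at x₀), fix 1 < x₀ < x₀+x₁ < x₀+x₂ < b, let n_k be an increasing sequence of positive integers with Σ 1/√(n_k) = 1, B_k = (−b^{n_k}x₂, −b^{n_k}x₁], D_k = (b^{n_k}x₀, b^{n_k}x₀+1], and let μ₁ be a distribution with μ₁(B_k) = 1/√(n_k) for all k and no mass outside ∪B_k. Then for every c ∈ ℝ, lim_{k→∞} μ*μ₁(D_k + c)/μ(D_k) = ∞. -/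
open MeasureTheory Filter Set

/-!
Write `y = b ^ n`. Log-periodicity gives `h (log x) = h (log (x / y))`, so on
`D = (y x₀, y x₀ + 1]` the density is `x ^ (-α - 1) / (-log (x / y - x₀))`, and `x / y - x₀ ≤ 1 / y`
makes it at most `(y x₀) ^ (-α - 1) / (n log b)`: the zero of `h` costs `μ (D)` a factor `1 / n`.
The mass `1 / √n` of `μ₁` on `B = (-y x₂, -y x₁]` translates `D + c` into
`y • [x₀ + x₁ / 2, (x₀ + x₂ + b) / 2]`, where `h ∘ log` is bounded below by some `m > 0`, so
`(μ ∗ μ₁)(D + c) ≥ const · y ^ (-α - 1) / √n`. The ratio is therefore at least `const · √n`.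
-/

open Real
open scoped ENNReal

section WithDensity

variable {X : Type*} [MeasurableSpace X] {ν : Measure X} {f : X → ℝ} {s : Set X}

lemma withDensity_ofReal_apply_le (hs : MeasurableSet s) {C : ℝ} (hf : ∀ x ∈ s, f x ≤ C) :
    ν.withDensity (fun x => ENNReal.ofReal (f x)) s ≤ ENNReal.ofReal C * ν s := by
  rw [withDensity_apply _ hs, ← setLIntegral_const]
  exact setLIntegral_mono' hs fun x hx => ENNReal.ofReal_le_ofReal (hf x hx)

lemma ofReal_mul_le_withDensity_ofReal_apply (hs : MeasurableSet s) {C : ℝ}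
    (hf : ∀ x ∈ s, C ≤ f x) :
    ENNReal.ofReal C * ν s ≤ ν.withDensity (fun x => ENNReal.ofReal (f x)) s := by
  rw [withDensity_apply _ hs, ← setLIntegral_const]
  exact setLIntegral_mono' hs fun x hx => ENNReal.ofReal_le_ofReal (hf x hx)

lemma withDensity_ofReal_apply_pos (hf : Measurable f) (hs : MeasurableSet s)
    (hpos : ∀ x ∈ s, 0 < f x) (hνs : 0 < ν s) :
    0 < ν.withDensity (fun x => ENNReal.ofReal (f x)) s := by
  rw [withDensity_apply _ hs, setLIntegral_pos_iff (by fun_prop)]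
  refine hνs.trans_le (measure_mono fun x hx => ⟨?_, hx⟩)
  simpa using hpos x hx

end WithDensity

section Convolution

variable (μ ν : Measure ℝ)

instance isFiniteMeasure_mconv [IsFiniteMeasure μ] [IsFiniteMeasure ν] :
    IsFiniteMeasure (mconv μ ν) :=
  inferInstanceAs (IsFiniteMeasure (μ ∗ ν))

lemma mconv_apply [SFinite μ] [SFinite ν] {s : Set ℝ} (hs : MeasurableSet s) :
    mconv μ ν s = ∫⁻ v, μ ((· + v) ⁻¹' s) ∂ν := by
  rw [mconv, Measure.map_apply measurable_add hs, Measure.prod_apply_symm (measurable_add hs)]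
  rfl

lemma mul_le_mconv_apply [SFinite μ] [SFinite ν] {s B : Set ℝ} (hs : MeasurableSet s)
    (hB : MeasurableSet B) {C : ℝ≥0∞} (hC : ∀ v ∈ B, C ≤ μ ((· + v) ⁻¹' s)) :
    C * ν B ≤ mconv μ ν s := by
  rw [mconv_apply μ ν hs, ← setLIntegral_const]
  exact (setLIntegral_mono' hB hC).trans (setLIntegral_le_lintegral _ _)

end Convolution

section LogPeriodicWeight

variable {h : ℝ → ℝ} {b : ℝ}

lemma Function.Periodic.apply_log_div_pow (hper : Function.Periodic h (log b)) (hb : 0 < b)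
    (n : ℕ) {x : ℝ} (hx : 0 < x) : h (log (x / b ^ n)) = h (log x) := by
  rw [log_div hx.ne' (by positivity), log_pow]
  exact hper.sub_nat_mul_eq n

lemma Function.Periodic.nonneg_of_nonneg_log (hper : Function.Periodic h (log b)) (hb : 1 < b)
    (hnn : ∀ x ∈ Ico 1 b, 0 ≤ h (log x)) (t : ℝ) : 0 ≤ h t := by
  obtain ⟨s, ⟨hs0, hsb⟩, hts⟩ := hper.exists_mem_Ico₀ (log_pos hb) t
  rw [hts, ← log_exp s]
  refine hnn _ ⟨one_le_exp hs0, ?_⟩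
  rwa [← exp_log (zero_lt_one.trans hb), exp_lt_exp]

variable {x₀ δ : ℝ}

lemma apply_log_near_spike
    (hlog : ∀ x : ℝ, 0 < |x - x₀| → |x - x₀| < δ → h (log x) = -1 / log |x - x₀|)
    (hδ1 : δ < 1) {t y : ℝ} (ht : 0 < t - x₀) (hty : t - x₀ ≤ y⁻¹) (hyδ : y⁻¹ < δ) :
    0 < h (log t) ∧ h (log t) ≤ (log y)⁻¹ := by
  have hy : 0 < log y := by
    rw [← inv_inv y]
    exact log_pos (one_lt_inv_iff₀.mpr ⟨ht.trans_le hty, hyδ.trans hδ1⟩)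
  have hle : log y ≤ -log (t - x₀) := by
    rw [le_neg, ← log_inv]; exact log_le_log ht hty
  rw [hlog t (by rwa [abs_of_pos ht]) (by rw [abs_of_pos ht]; linarith), abs_of_pos ht,
    neg_div, ← div_neg, one_div]
  exact ⟨inv_pos.mpr (hy.trans_le hle), inv_anti₀ hy hle⟩

end LogPeriodicWeight

noncomputable def logPeriodicPareto (α : ℝ) (h : ℝ → ℝ) (x : ℝ) : ℝ :=
  (Ici (1 : ℝ)).indicator (fun y => y ^ (-α - 1) * h (log y)) x

section LogPeriodicPareto

variable {α : ℝ} {h : ℝ → ℝ}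

lemma logPeriodicPareto_of_one_le {x : ℝ} (hx : 1 ≤ x) :
    logPeriodicPareto α h x = x ^ (-α - 1) * h (log x) :=
  indicator_of_mem (mem_Ici.mpr hx) _

lemma measurable_logPeriodicPareto (hh : Measurable h) : Measurable (logPeriodicPareto α h) :=
  ((measurable_id.pow_const _).mul (hh.comp measurable_log)).indicator measurableSet_Ici

lemma logPeriodicPareto_nonneg (hh : ∀ t, 0 ≤ h t) (x : ℝ) : 0 ≤ logPeriodicPareto α h x :=
  indicator_nonneg (fun _ hy => mul_nonneg (rpow_nonneg (zero_le_one.trans hy) _) (hh _)) x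

lemma integrable_logPeriodicPareto (hα : 0 < α) (hh : Measurable h)
    (hbdd : Bornology.IsBounded (range h)) : Integrable (logPeriodicPareto α h) := by
  obtain ⟨C, hC⟩ := isBounded_iff_forall_norm_le.mp hbdd
  have hdom : Integrable ((Ici (1 : ℝ)).indicator fun y => C * y ^ (-α - 1)) := by
    rw [integrable_indicator_iff measurableSet_Ici, integrableOn_Ici_iff_integrableOn_Ioi]
    exact ((integrableOn_Ioi_rpow_iff one_pos).mpr (by linarith)).const_mul C
  refine hdom.mono' (measurable_logPeriodicPareto hh).aestronglyMeasurable
    (ae_of_all _ fun x => ?_)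
  by_cases hx : x ∈ Ici (1 : ℝ)
  · have hpow : 0 ≤ x ^ (-α - 1) := rpow_nonneg (zero_le_one.trans hx) _
    rw [logPeriodicPareto_of_one_le hx, indicator_of_mem hx, norm_mul, norm_of_nonneg hpow,
      mul_comm]
    exact mul_le_mul_of_nonneg_right (hC _ (mem_range_self _)) hpow
  · simp [logPeriodicPareto, hx]

lemma integral_logPeriodicPareto_pos (hnn : ∀ t, 0 ≤ h t)
    (hint : Integrable (logPeriodicPareto α h)) {a c : ℝ} (ha : 1 ≤ a) (hac : a < c)
    (hpos : ∀ x ∈ Ioo a c, 0 < h (log x)) : 0 < ∫ x, logPeriodicPareto α h x := by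
  refine (integral_pos_iff_support_of_nonneg (logPeriodicPareto_nonneg hnn) hint).2 ?_
  refine (Real.volume_Ioo ▸ ENNReal.ofReal_pos.mpr (sub_pos.mpr hac)).trans_le
    (measure_mono fun x hx => ?_)
  have hx1 : 1 ≤ x := ha.trans hx.1.le
  rw [Function.mem_support, logPeriodicPareto_of_one_le hx1]
  exact (mul_pos (rpow_pos_of_pos (by linarith) _) (hpos x hx)).ne'

variable {b x₀ δ : ℝ}

lemma logPeriodicPareto_near_spike (hb : 1 ≤ b) (hx₀ : 1 ≤ x₀) (hα : -1 ≤ α)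
    (hper : Function.Periodic h (log b))
    (hlog : ∀ x : ℝ, 0 < |x - x₀| → |x - x₀| < δ → h (log x) = -1 / log |x - x₀|)
    (hδ1 : δ < 1) {n : ℕ} (hn : (b ^ n)⁻¹ < δ) {x : ℝ}
    (hx : x ∈ Ioc (b ^ n * x₀) (b ^ n * x₀ + 1)) :
    0 < logPeriodicPareto α h x ∧
      logPeriodicPareto α h x ≤ (b ^ n * x₀) ^ (-α - 1) * (log (b ^ n))⁻¹ := by
  have hy : 1 ≤ b ^ n := one_le_pow₀ hb
  have hyx₀ : 1 ≤ b ^ n * x₀ := one_le_mul_of_one_le_of_one_le hy hx₀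
  have ht : 0 < x / b ^ n - x₀ := by
    rw [sub_pos, lt_div_iff₀ (by positivity), mul_comm]; exact hx.1
  have hty : x / b ^ n - x₀ ≤ (b ^ n)⁻¹ := by
    rw [sub_le_iff_le_add, div_le_iff₀ (by positivity), add_mul,
      inv_mul_cancel₀ (by positivity)]
    linarith [hx.2]
  obtain ⟨hpos, hle⟩ := apply_log_near_spike hlog hδ1 ht hty hn
  rw [hper.apply_log_div_pow (by linarith) n (by linarith [hx.1])] at hpos hle
  rw [logPeriodicPareto_of_one_le (hyx₀.trans hx.1.le)]
  exact ⟨mul_pos (rpow_pos_of_pos (by linarith [hx.1]) _) hpos,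
    mul_le_mul (rpow_le_rpow_of_nonpos (by linarith) hx.1.le (by linarith)) hle hpos.le
      (rpow_nonneg (by linarith) _)⟩

lemma le_logPeriodicPareto_of_mem_Icc (hb : 1 ≤ b) (hα : -1 ≤ α)
    (hper : Function.Periodic h (log b)) {L R m : ℝ} (hL : 1 ≤ L) (hm0 : 0 ≤ m)
    (hm : ∀ w ∈ Icc L R, m ≤ h (log w)) (n : ℕ) {u : ℝ} (hu : u ∈ Icc (b ^ n * L) (b ^ n * R)) :
    (b ^ n * R) ^ (-α - 1) * m ≤ logPeriodicPareto α h u := by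
  have hy : 1 ≤ b ^ n := one_le_pow₀ hb
  have hu1 : 1 ≤ u := (one_le_mul_of_one_le_of_one_le hy hL).trans hu.1
  have hw : u / b ^ n ∈ Icc L R := by
    constructor
    · rw [le_div_iff₀ (by positivity), mul_comm]; exact hu.1
    · rw [div_le_iff₀ (by positivity), mul_comm]; exact hu.2
  have hmu := hm _ hw
  rw [hper.apply_log_div_pow (by linarith) n (by linarith)] at hmu
  rw [logPeriodicPareto_of_one_le hu1]
  exact mul_le_mul (rpow_le_rpow_of_nonpos (by linarith) hu.2 (by linarith)) hmu hm0
    (rpow_nonneg (by linarith) _)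

end LogPeriodicPareto

section Asymptotics

variable {α b x₀ δ M : ℝ} {h : ℝ → ℝ} {μ : Measure ℝ}

lemma toReal_measure_Ioc_near_spike (hb : 1 ≤ b) (hx₀ : 1 ≤ x₀) (hα : -1 ≤ α)
    (hh : Measurable h) (hper : Function.Periodic h (log b))
    (hlog : ∀ x : ℝ, 0 < |x - x₀| → |x - x₀| < δ → h (log x) = -1 / log |x - x₀|)
    (hδ1 : δ < 1) (hM : 0 < M)
    (hμ : μ = volume.withDensity fun x => ENNReal.ofReal (M⁻¹ * logPeriodicPareto α h x))
    {n : ℕ} (hn : (b ^ n)⁻¹ < δ) :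
    0 < (μ (Ioc (b ^ n * x₀) (b ^ n * x₀ + 1))).toReal ∧
      (μ (Ioc (b ^ n * x₀) (b ^ n * x₀ + 1))).toReal ≤
        M⁻¹ * ((b ^ n * x₀) ^ (-α - 1) * (log (b ^ n))⁻¹) := by
  subst hμ
  have hbound x (hx : x ∈ Ioc (b ^ n * x₀) (b ^ n * x₀ + 1)) :=
    logPeriodicPareto_near_spike hb hx₀ hα hper hlog hδ1 hn hx
  have hle := withDensity_ofReal_apply_le (ν := volume) measurableSet_Ioc fun x hx =>
    mul_le_mul_of_nonneg_left (hbound x hx).2 (inv_nonneg.mpr hM.le)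
  rw [Real.volume_Ioc, add_sub_cancel_left, ENNReal.ofReal_one, mul_one] at hle
  have hlog_nonneg : 0 ≤ log (b ^ n) := log_nonneg (one_le_pow₀ hb)
  have hpos := withDensity_ofReal_apply_pos (ν := volume)
    ((measurable_logPeriodicPareto hh).const_mul M⁻¹) measurableSet_Ioc
    (fun x hx => mul_pos (inv_pos.mpr hM) (hbound x hx).1) (by simp)
  exact ⟨ENNReal.toReal_pos hpos.ne' (ne_top_of_le_ne_top ENNReal.ofReal_ne_top hle),
    ENNReal.toReal_le_of_le_ofReal (by positivity) hle⟩

/-- `hsq` and `hsp` say that `Ioc s (s + 1) - v ⊆ b ^ n • Icc L R` for every `v ∈ Ioc p q`. -/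
lemma le_toReal_mconv_Ioc (hb : 1 ≤ b) (hα : -1 ≤ α) (hper : Function.Periodic h (log b))
    {L R m : ℝ} (hL : 1 ≤ L) (hLR : L ≤ R) (hm0 : 0 ≤ m) (hm : ∀ w ∈ Icc L R, m ≤ h (log w))
    (hM : 0 < M)
    (hμ : μ = volume.withDensity fun x => ENNReal.ofReal (M⁻¹ * logPeriodicPareto α h x))
    [IsFiniteMeasure μ] (ν : Measure ℝ) [IsFiniteMeasure ν] {n : ℕ} {s p q : ℝ}
    (hsq : b ^ n * L ≤ s - q) (hsp : s + 1 - p ≤ b ^ n * R) :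
    M⁻¹ * ((b ^ n * R) ^ (-α - 1) * m) * (ν (Ioc p q)).toReal ≤
      (mconv μ ν (Ioc s (s + 1))).toReal := by
  have hC : 0 ≤ M⁻¹ * ((b ^ n * R) ^ (-α - 1) * m) := by
    have : 0 ≤ b ^ n * R := mul_nonneg (by positivity) (by linarith)
    positivity
  have key : ENNReal.ofReal (M⁻¹ * ((b ^ n * R) ^ (-α - 1) * m)) * ν (Ioc p q) ≤
      mconv μ ν (Ioc s (s + 1)) := by
    refine mul_le_mconv_apply μ ν measurableSet_Ioc measurableSet_Ioc fun v hv => ?_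
    have hpre : (· + v) ⁻¹' Ioc s (s + 1) = Ioc (s - v) (s + 1 - v) := by
      ext u; simp only [mem_preimage, mem_Ioc, sub_lt_iff_lt_add, le_sub_iff_add_le]
    rw [hpre, hμ]
    calc _ = ENNReal.ofReal (M⁻¹ * ((b ^ n * R) ^ (-α - 1) * m)) *
          volume (Ioc (s - v) (s + 1 - v)) := by
          rw [Real.volume_Ioc, show s + 1 - v - (s - v) = 1 by ring, ENNReal.ofReal_one, mul_one]
      _ ≤ _ := ofReal_mul_le_withDensity_ofReal_apply measurableSet_Ioc fun u hu =>
          mul_le_mul_of_nonneg_left (le_logPeriodicPareto_of_mem_Icc hb hα hper hL hm0 hm n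
            ⟨by linarith [hu.1, hv.2], by linarith [hu.2, hv.1]⟩) (inv_nonneg.mpr hM.le)
  have := ENNReal.toReal_mono (measure_ne_top _ _) key
  rwa [ENNReal.toReal_mul, ENNReal.toReal_ofReal hC] at this

lemma mul_sqrt_le_div_of_bounds {y x₀ R p m N ℓ num den : ℝ} (hM : 0 < M) (hy : 0 < y)
    (hx₀ : 0 < x₀) (hR : 0 < R) (hN : 0 < N) (hℓ : 0 < ℓ) (hm : 0 ≤ m)
    (hnum : M⁻¹ * ((y * R) ^ p * m) * (1 / √N) ≤ num) (hden0 : 0 < den)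
    (hden : den ≤ M⁻¹ * ((y * x₀) ^ p * (N * ℓ)⁻¹)) :
    m * ℓ * (R / x₀) ^ p * √N ≤ num / den := by
  have hsplit : (y * R) ^ p = (y * x₀) ^ p * (R / x₀) ^ p := by
    rw [← mul_rpow (by positivity) (by positivity)]
    congr 1
    field_simp
  have hyx₀ : 0 < (y * x₀) ^ p := rpow_pos_of_pos (by positivity) p
  rw [le_div_iff₀ hden0]
  calc m * ℓ * (R / x₀) ^ p * √N * den
      ≤ m * ℓ * (R / x₀) ^ p * √N * (M⁻¹ * ((y * x₀) ^ p * (N * ℓ)⁻¹)) := by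
        gcongr
    _ = M⁻¹ * ((y * R) ^ p * m) * (1 / √N) := by
        rw [hsplit]
        field_simp
        rw [sq_sqrt hN.le]
    _ ≤ num := hnum

lemma mul_sqrt_le_ratio_at_scale (hb : 1 < b) (hx₀ : 1 ≤ x₀) (hα : -1 ≤ α) (hh : Measurable h)
    (hper : Function.Periodic h (log b))
    (hlog : ∀ x : ℝ, 0 < |x - x₀| → |x - x₀| < δ → h (log x) = -1 / log |x - x₀|)
    (hδ1 : δ < 1) (hM : 0 < M)
    (hμ : μ = volume.withDensity fun x => ENNReal.ofReal (M⁻¹ * logPeriodicPareto α h x))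
    [IsFiniteMeasure μ] (ν : Measure ℝ) [IsFiniteMeasure ν] {L R m : ℝ} (hL : 1 ≤ L)
    (hLR : L ≤ R) (hm0 : 0 ≤ m) (hm : ∀ w ∈ Icc L R, m ≤ h (log w)) {n : ℕ} (hn : 0 < n)
    (hnδ : (b ^ n)⁻¹ < δ) {c p q : ℝ} (hν : ν (Ioc p q) = ENNReal.ofReal (1 / √n))
    (hsq : b ^ n * L ≤ b ^ n * x₀ + c - q) (hsp : b ^ n * x₀ + c + 1 - p ≤ b ^ n * R) :
    m * log b * (R / x₀) ^ (-α - 1) * √n ≤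
      (mconv μ ν (Ioc (b ^ n * x₀ + c) (b ^ n * x₀ + c + 1))).toReal /
        (μ (Ioc (b ^ n * x₀) (b ^ n * x₀ + 1))).toReal := by
  obtain ⟨hden0, hden⟩ :=
    toReal_measure_Ioc_near_spike hb.le hx₀ hα hh hper hlog hδ1 hM hμ hnδ
  have hnum := le_toReal_mconv_Ioc hb.le hα hper hL hLR hm0 hm hM hμ ν hsq hsp
  rw [log_pow] at hden
  rw [hν, ENNReal.toReal_ofReal (by positivity)] at hnum
  exact mul_sqrt_le_div_of_bounds hM (by positivity) (by linarith) (by linarith)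
    (Nat.cast_pos.mpr hn) (log_pos hb) hm0 hnum hden0 hden

end Asymptotics

theorem stmt19_general
(x₀ b α δ : ℝ) (hx₀ : 1 < x₀) (hb : x₀ < b) (hα : 0 < α)
    (hδ0 : 0 < δ) (hδ1 : δ < 1)
    (h : ℝ → ℝ) (hcont : Continuous h) (hper : Function.Periodic h (Real.log b))
    (hpos : ∀ x : ℝ, x ∈ Ico 1 x₀ ∪ Ioc x₀ b → 0 < h (Real.log x))
    (hzero : h (Real.log x₀) = 0)
    (hlog : ∀ x : ℝ, 0 < |x - x₀| → |x - x₀| < δ → h (Real.log x) = -1 / Real.log |x - x₀|)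
    (φ : ℝ → ℝ)
    (hφ : φ = fun x => indicator (Ici (1:ℝ)) (fun y => y ^ (-α - 1) * h (Real.log y)) x)
    (M : ℝ) (hM : M = ∫ x, φ x)
    (μ : Measure ℝ) (hμ : μ = volume.withDensity (fun x => ENNReal.ofReal (M⁻¹ * φ x)))
    (x₁ x₂ : ℝ) (hx₁ : 0 < x₁) (hx₁₂ : x₁ < x₂) (hxb : x₀ + x₂ < b)
    (nk : ℕ → ℕ) (hmono : StrictMono nk) (hnkpos : ∀ k, 0 < nk k)
    (μ₁ : Measure ℝ) (hμ₁p : IsProbabilityMeasure μ₁)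
    (hμ₁B : ∀ k : ℕ,
      μ₁ (Ioc (-(b ^ nk k * x₂)) (-(b ^ nk k * x₁))) = ENNReal.ofReal (1 / Real.sqrt (nk k))) :
    ∀ c : ℝ, Tendsto (fun k : ℕ =>
        ((mconv μ μ₁) (Ioc (b ^ nk k * x₀ + c) (b ^ nk k * x₀ + 1 + c))).toReal /
          (μ (Ioc (b ^ nk k * x₀) (b ^ nk k * x₀ + 1))).toReal)
      atTop atTop := by
  intro c
  obtain rfl : φ = logPeriodicPareto α h := hφ
  have hb1 : 1 < b := hx₀.trans hb
  have hnn := hper.nonneg_of_nonneg_log hb1 fun x hx => (eq_or_ne x x₀).elim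
    (fun hx₀x => hx₀x ▸ hzero.ge) fun hx₀x => (hpos x <| hx₀x.lt_or_gt.imp
      (fun hlt => ⟨hx.1, hlt⟩) fun hgt => ⟨hgt, hx.2.le⟩).le
  have hint := integrable_logPeriodicPareto hα hcont.measurable
    (hper.isBounded_of_continuous (log_pos hb1).ne' hcont)
  have hM0 : 0 < M := hM ▸ integral_logPeriodicPareto_pos hnn hint hx₀.le hb
    fun x hx => hpos x (Or.inr ⟨hx.1, hx.2.le⟩)
  have : IsFiniteMeasure μ := hμ ▸ isFiniteMeasure_withDensity_ofReal (hint.const_mul _).2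
  obtain ⟨m, hm0, hm⟩ := isCompact_Icc.exists_forall_le' (a := 0)
    (s := Icc (x₀ + x₁ / 2) ((x₀ + x₂ + b) / 2))
    (hcont.comp_continuousOn <| continuousOn_log.mono fun w hw => ne_of_gt (by linarith [hw.1]))
    fun w hw => hpos w (Or.inr ⟨by linarith [hw.1], by linarith [hw.2]⟩)
  have hy : Tendsto (fun k => b ^ nk k) atTop atTop :=
    (tendsto_pow_atTop_atTop_of_one_lt hb1).comp hmono.tendsto_atTop
  have hK : 0 < m * log b * (((x₀ + x₂ + b) / 2) / x₀) ^ (-α - 1) :=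
    mul_pos (mul_pos hm0 (log_pos hb1)) (rpow_pos_of_pos (div_pos (by linarith) (by linarith)) _)
  refine tendsto_atTop_mono' _ ?_ ((tendsto_sqrt_atTop.comp
    (tendsto_natCast_atTop_atTop.comp hmono.tendsto_atTop)).const_mul_atTop hK)
  filter_upwards [hy.eventually_gt_atTop δ⁻¹,
    (hy.atTop_mul_const (half_pos hx₁)).eventually_ge_atTop (-c),
    (hy.atTop_mul_const (half_pos (sub_pos.mpr hxb))).eventually_ge_atTop (1 + c)]
    with k hδk hlo hhi
  rw [add_right_comm _ 1 c]
  exact mul_sqrt_le_ratio_at_scale hb1 hx₀.le (by linarith) hcont.measurable hper hlog hδ1 hM0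
    hμ μ₁ (by linarith) (by linarith) hm0.le hm (hnkpos k) (inv_lt_of_inv_lt₀ hδ0 hδk) (hμ₁B k)
    (by linarith) (by linarith)

theorem stmt19
(x₀ b α δ : ℝ) (hx₀ : 1 < x₀) (hb : x₀ < b) (hα : 0 < α)
    (hδ0 : 0 < δ) (hδ1 : δ < 1) (hδ2 : δ < x₀ - 1) (hδ3 : δ < b - x₀)
    (h : ℝ → ℝ) (hcont : Continuous h) (hper : Function.Periodic h (Real.log b))
    (hpos : ∀ x : ℝ, x ∈ Ico 1 x₀ ∪ Ioc x₀ b → 0 < h (Real.log x))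
    (hzero : h (Real.log x₀) = 0)
    (hlog : ∀ x : ℝ, 0 < |x - x₀| → |x - x₀| < δ → h (Real.log x) = -1 / Real.log |x - x₀|)
    (φ : ℝ → ℝ)
    (hφ : φ = fun x => indicator (Ici (1:ℝ)) (fun y => y ^ (-α - 1) * h (Real.log y)) x)
    (M : ℝ) (hM : M = ∫ x, φ x)
    (μ : Measure ℝ) (hμ : μ = volume.withDensity (fun x => ENNReal.ofReal (M⁻¹ * φ x)))
    (x₁ x₂ : ℝ) (hx₁ : 0 < x₁) (hx₁₂ : x₁ < x₂) (hxb : x₀ + x₂ < b)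
    (nk : ℕ → ℕ) (hmono : StrictMono nk) (hnkpos : ∀ k, 0 < nk k)
    (hsum : ∑' k : ℕ, (1 : ℝ) / Real.sqrt (nk k) = 1)
    (μ₁ : Measure ℝ) (hμ₁p : IsProbabilityMeasure μ₁)
    (hμ₁B : ∀ k : ℕ,
      μ₁ (Ioc (-(b ^ nk k * x₂)) (-(b ^ nk k * x₁))) = ENNReal.ofReal (1 / Real.sqrt (nk k)))
    (hμ₁c : μ₁ ((⋃ k : ℕ, Ioc (-(b ^ nk k * x₂)) (-(b ^ nk k * x₁)))ᶜ) = 0) :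
    ∀ c : ℝ, Tendsto (fun k : ℕ =>
        ((mconv μ μ₁) (Ioc (b ^ nk k * x₀ + c) (b ^ nk k * x₀ + 1 + c))).toReal /
          (μ (Ioc (b ^ nk k * x₀) (b ^ nk k * x₀ + 1))).toReal)
      atTop atTop :=
  stmt19_general x₀ b α δ hx₀ hb hα hδ0 hδ1 h hcont hper hpos hzero hlog φ hφ M hM μ hμ x₁ x₂ hx₁
    hx₁₂ hxb nk hmono hnkpos μ₁ hμ₁p hμ₁B
end
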